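/- arXiv:2604.25659 — 4 statements merged into one kernel-verified Lean document; each statement's English description precedes it below -/
import Mathlib

section
/- Let X be a complete CAT(0) metric space and c : X → ℝ a convex function (convex along geodesics). If every sublevel set {x ∈ X : c(x) ≤ u}, u ∈ ℝ, is bounded, then c attains its minimum on X. -/
/-
Let `z` be any point and `C n` a decreasing sequence of nonempty closed convex subsets of a bounded
set. The distances `r n = d(z, C n)` increase to a finite limit `ρ`. If `x, y ∈ C N` are almost
closest to `z`, their midpoint `m` lies in `C N`, so `d(z, m) ≥ r N`, and the CAT(0) inequality
`d(x, y)² ≤ 2 d(z, x)² + 2 d(z, y)² - 4 d(z, m)²` gives `d(x, y)² ≲ 4 (ρ² - r N²) → 0`. Hence almost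
closest points form a Cauchy sequence whose limit lies in every `C n`. Applied to the sublevel sets
`{c ≤ c (y n)}` along a minimizing sequence `y n`, this yields a minimizer.
-/

/-- A geodesic from `x` to `y`, parametrized proportionally to arc length on `[0,1]`. -/
def IsGeodesic {X : Type*} [MetricSpace X] (γ : ℝ → X) (x y : X) : Prop :=
  γ 0 = x ∧ γ 1 = y ∧
    ∀ s ∈ Set.Icc (0 : ℝ) 1, ∀ t ∈ Set.Icc (0 : ℝ) 1,
      dist (γ s) (γ t) = |s - t| * dist x y

/-- A geodesic metric space: any two points are joined by a geodesic. -/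
def GeodesicMetricSpace (X : Type*) [MetricSpace X] : Prop :=
  ∀ x y : X, ∃ γ : ℝ → X, IsGeodesic γ x y

/-- The CAT(0) comparison inequality along geodesics. -/
def IsCAT0 (X : Type*) [MetricSpace X] : Prop :=
  ∀ x y : X, ∀ γ : ℝ → X, IsGeodesic γ x y → ∀ t ∈ Set.Icc (0 : ℝ) 1, ∀ z : X,
    dist z (γ t) ^ 2 ≤
      (1 - t) * dist z x ^ 2 + t * dist z y ^ 2 - t * (1 - t) * dist x y ^ 2

/-- Convexity of a function along every geodesic. -/
def ConvexAlongGeodesics {X : Type*} [MetricSpace X] (c : X → ℝ) : Prop :=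
  ∀ x y : X, ∀ γ : ℝ → X, IsGeodesic γ x y →
    ∀ t ∈ Set.Icc (0 : ℝ) 1, c (γ t) ≤ (1 - t) * c x + t * c y

open Filter Topology

section

variable {X : Type*} [MetricSpace X]

def IsGeodesicallyConvex (S : Set X) : Prop :=
  ∀ x ∈ S, ∀ y ∈ S, ∀ γ : ℝ → X, IsGeodesic γ x y → ∀ t ∈ Set.Icc (0 : ℝ) 1, γ t ∈ S

theorem ConvexAlongGeodesics.isGeodesicallyConvex_sublevel {c : X → ℝ}
    (hc : ConvexAlongGeodesics c) (u : ℝ) : IsGeodesicallyConvex {x | c x ≤ u} := by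
  intro x hx y hy γ hγ t ht
  have := hc x y γ hγ t ht
  simp only [Set.mem_ofPred_eq] at *
  nlinarith [ht.1, ht.2]

theorem IsCAT0.dist_sq_le_midpoint (hcat : IsCAT0 X) {x y : X} {γ : ℝ → X}
    (hγ : IsGeodesic γ x y) (z : X) :
    dist x y ^ 2 ≤ 2 * dist z x ^ 2 + 2 * dist z y ^ 2 - 4 * dist z (γ (1 / 2)) ^ 2 := by
  have := hcat x y γ hγ (1 / 2) (by norm_num) z
  linarith

theorem IsCAT0.dist_sq_le_of_isGeodesicallyConvex (hgeo : GeodesicMetricSpace X)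
    (hcat : IsCAT0 X) {S : Set X} (hS : IsGeodesicallyConvex S) {x y : X} (hx : x ∈ S)
    (hy : y ∈ S) (z : X) :
    dist x y ^ 2 ≤ 2 * dist z x ^ 2 + 2 * dist z y ^ 2 - 4 * Metric.infDist z S ^ 2 := by
  obtain ⟨γ, hγ⟩ := hgeo x y
  have hmid : Metric.infDist z S ≤ dist z (γ (1 / 2)) :=
    Metric.infDist_le_dist_of_mem (hS x hx y hy γ hγ _ (by norm_num))
  have := pow_le_pow_left₀ Metric.infDist_nonneg hmid 2
  linarith [hcat.dist_sq_le_midpoint hγ z]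

theorem IsCAT0.nonempty_iInter_of_isGeodesicallyConvex [CompleteSpace X]
    (hgeo : GeodesicMetricSpace X) (hcat : IsCAT0 X) {C : ℕ → Set X} (hanti : Antitone C)
    (hne : ∀ n, (C n).Nonempty) (hclosed : ∀ n, IsClosed (C n))
    (hconv : ∀ n, IsGeodesicallyConvex (C n))
    (hbdd : Bornology.IsBounded (C 0)) : (⋂ n, C n).Nonempty := by
  obtain ⟨z, -⟩ := hne 0
  set r : ℕ → ℝ := fun n => Metric.infDist z (C n)
  have hr_mono : Monotone r := fun n m h =>
    Metric.infDist_le_infDist_of_subset (hanti h) (hne m)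
  have hr_bdd : BddAbove (Set.range r) := by
    obtain ⟨R, hR⟩ := hbdd.subset_closedBall z
    refine ⟨R, Set.forall_mem_range.2 fun n => ?_⟩
    obtain ⟨w, hw⟩ := hne n
    exact (Metric.infDist_le_dist_of_mem hw).trans
      (by simpa [dist_comm] using hR (hanti (Nat.zero_le n) hw))
  set ρ := ⨆ n, r n
  have hr_tend : Tendsto r atTop (𝓝 ρ) := tendsto_atTop_ciSup hr_mono hr_bdd
  have hx : ∀ n : ℕ, ∃ x ∈ C n, dist z x < r n + 1 / (n + 1) := fun n =>
    (Metric.infDist_lt_iff (hne n)).1 (lt_add_of_pos_right _ Nat.one_div_pos_of_nat)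
  choose x hxC hxd using hx
  have hx_near : ∀ n N : ℕ, N ≤ n → dist z (x n) ^ 2 ≤ (ρ + 1 / (N + 1)) ^ 2 := by
    intro n N hn
    refine pow_le_pow_left₀ dist_nonneg ((hxd n).le.trans (add_le_add ?_ ?_)) 2
    · exact le_ciSup hr_bdd n
    · exact Nat.one_div_le_one_div hn
  have hcauchy : CauchySeq x := by
    refine cauchySeq_of_le_tendsto_0 (fun N : ℕ => √(4 * ((ρ + 1 / (N + 1)) ^ 2 - r N ^ 2)))
      (fun n m N hn hm => (le_abs_self _).trans (Real.abs_le_sqrt ?_)) ?_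
    · have := hcat.dist_sq_le_of_isGeodesicallyConvex hgeo (hconv N) (hanti hn (hxC n))
        (hanti hm (hxC m)) z
      linarith [hx_near n N hn, hx_near m N hm]
    · have hlim : Tendsto (fun N : ℕ => 4 * ((ρ + 1 / (N + 1)) ^ 2 - r N ^ 2)) atTop
          (𝓝 (4 * ((ρ + 0) ^ 2 - ρ ^ 2))) :=
        (((tendsto_const_nhds.add tendsto_one_div_add_atTop_nhds_zero_nat).pow 2).sub
          (hr_tend.pow 2)).const_mul 4
      simpa using hlim.sqrt
  obtain ⟨x₀, hx₀⟩ := cauchySeq_tendsto_of_complete hcauchy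
  exact ⟨x₀, Set.mem_iInter.2 fun n => (hclosed n).mem_of_tendsto hx₀
    (eventually_atTop.2 ⟨n, fun m hm => hanti hm (hxC m)⟩)⟩

end

/-- a convex lower semicontinuous function with bounded sublevel sets on a
complete CAT(0) space attains its minimum. -/
theorem stmt5 {X : Type*} [MetricSpace X] [CompleteSpace X] [Nonempty X]
    (hgeo : GeodesicMetricSpace X) (hcat : IsCAT0 X)
    (c : X → ℝ) (hconv : ConvexAlongGeodesics c) (hlsc : LowerSemicontinuous c)
    (hbdd : ∀ u : ℝ, Bornology.IsBounded {x : X | c x ≤ u}) :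
    ∃ x₀ : X, ∀ x : X, c x₀ ≤ c x := by
  -- The infimum is taken in `EReal`, since `c` is not yet known to be bounded below.
  obtain ⟨u, hu_anti, hu_tend, hu_mem⟩ := exists_seq_tendsto_sInf
    (Set.range_nonempty fun x => (c x : EReal)) (OrderBot.bddBelow _)
  choose y hy using hu_mem
  have hanti : Antitone fun n => {x | c x ≤ c (y n)} := fun n m h x hx =>
    hx.trans (EReal.coe_le_coe_iff.1 ((hy m).trans_le ((hu_anti h).trans_eq (hy n).symm)))
  obtain ⟨x₀, hx₀⟩ := hcat.nonempty_iInter_of_isGeodesicallyConvex hgeo hanti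
    (fun n => ⟨y n, le_refl (c (y n))⟩) (fun _ => hlsc.isClosed_preimage _)
    (fun _ => hconv.isGeodesicallyConvex_sublevel _) (hbdd _)
  have hmin : (c x₀ : EReal) ≤ sInf (Set.range fun x => (c x : EReal)) :=
    ge_of_tendsto' hu_tend fun n =>
      (hy n).symm ▸ EReal.coe_le_coe_iff.2 (Set.mem_iInter.1 hx₀ n)
  exact ⟨x₀, fun x => EReal.coe_le_coe_iff.1 (hmin.trans (sInf_le ⟨x, rfl⟩))⟩
end

section
/- Let w_1, ..., w_N ∈ ℤ^r and a_1, ..., a_N ∈ [0, +∞) with min_i a_i = 0, and let c(v) := max_i (⟨w_i, v⟩ - a_i). If 0 does not lie in the convex hull of {w_i : a_i = 0}, then inf_{ℝ^r} c < 0 = c(0); in particular 0 is not a minimum point of c. -/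
open scoped RealInnerProductSpace

/-- for `w_i ∈ ℤ^r`, finite `a_i ≥ 0` with `min_i a_i = 0`, and
`c(v) := max_i (⟨w_i, v⟩ - a_i)`: if `0 ∉ conv{w_i : a_i = 0}`, then `c(0) = 0` and
`inf c < 0`; in particular `0` is not a minimum point of `c`. -/
theorem stmt11 {r N : ℕ} [Nonempty (Fin N)]
    (w : Fin N → EuclideanSpace ℝ (Fin r))
    (hw : ∀ i j, ∃ m : ℤ, w i j = (m : ℝ))
    (a : Fin N → ℝ) (ha : ∀ i, 0 ≤ a i) (h0 : ∃ i, a i = 0)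
    (hnot : (0 : EuclideanSpace ℝ (Fin r)) ∉
      convexHull ℝ {x | ∃ i, a i = 0 ∧ w i = x}) :
    (⨆ i, (⟪w i, (0 : EuclideanSpace ℝ (Fin r))⟫ - a i)) = 0 ∧
    (∃ v : EuclideanSpace ℝ (Fin r), (⨆ i, (⟪w i, v⟫ - a i)) < 0) := by
  obtain ⟨i0, hi0⟩ := h0
  constructor
  · simp only [inner_zero_right, zero_sub]
    apply le_antisymm
    · exact ciSup_le fun i => neg_nonpos.2 (ha i)
    · have := le_ciSup (f := fun i => -a i) (Set.Finite.bddAbove (Set.finite_range _)) i0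
      simpa [hi0] using this
  · -- the exceptional set is finite, its hull compact and closed
    set S : Set (EuclideanSpace ℝ (Fin r)) := {x | ∃ i, a i = 0 ∧ w i = x} with hS
    have hSfin : S.Finite := (Set.finite_range w).subset (by
      rintro x ⟨i, -, rfl⟩; exact ⟨i, rfl⟩)
    obtain ⟨f, u, hfu, hub⟩ := geometric_hahn_banach_point_closed
      (convex_convexHull ℝ S) (hSfin.isCompact_convexHull (𝕜 := ℝ)).isClosed hnot
    have hu : 0 < u := by simpa using hfu
    set y := (InnerProductSpace.toDual ℝ (EuclideanSpace ℝ (Fin r))).symm f with hy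
    have hyx : ∀ x, ⟪y, x⟫ = f x := fun x => InnerProductSpace.toDual_symm_apply
    have huniv : (Finset.univ : Finset (Fin N)).Nonempty := Finset.univ_nonempty
    set t : ℝ := Finset.univ.inf' huniv
      (fun i => if a i = 0 then 1 else a i / (|⟪y, w i⟫| + 1)) with ht
    have habs : ∀ i, (0:ℝ) < |⟪y, w i⟫| + 1 := fun i => by positivity
    have htpos : 0 < t := by
      rw [ht, Finset.lt_inf'_iff]
      intro i _
      by_cases h : a i = 0
      · simp [h]
      · simp only [h, if_false]
        exact div_pos (lt_of_le_of_ne (ha i) (Ne.symm h)) (habs i)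
    have htle : ∀ i, a i ≠ 0 → t ≤ a i / (|⟪y, w i⟫| + 1) := by
      intro i h
      calc t ≤ (if a i = 0 then 1 else a i / (|⟪y, w i⟫| + 1)) :=
              Finset.inf'_le _ (Finset.mem_univ i)
        _ = a i / (|⟪y, w i⟫| + 1) := if_neg h
    refine ⟨(-t) • y, ?_⟩
    have hb : -(t * min u 1) < 0 := by
      have : 0 < min u 1 := lt_min hu one_pos
      nlinarith
    refine lt_of_le_of_lt (ciSup_le fun i => ?_) hb
    have hin : ⟪w i, (-t) • y⟫ = -t * ⟪y, w i⟫ := by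
      rw [real_inner_smul_right, real_inner_comm]
    rw [hin]
    by_cases h : a i = 0
    · have hmem : w i ∈ convexHull ℝ S := subset_convexHull ℝ S ⟨i, h, rfl⟩
      have hgt : u < ⟪y, w i⟫ := by rw [hyx]; exact hub _ hmem
      have hmin : min u 1 ≤ u := min_le_left _ _
      rw [h]
      nlinarith
    · have h1 : t * (|⟪y, w i⟫| + 1) ≤ a i :=
        (le_div_iff₀ (habs i)).1 (htle i h)
      have h2 : -t * ⟪y, w i⟫ ≤ t * |⟪y, w i⟫| := by
        have := neg_abs_le (⟪y, w i⟫)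
        nlinarith
      have hmin : min u 1 ≤ 1 := min_le_right _ _
      nlinarith
end

section
/- Let Γ be a dense ℚ-vector subspace of ℝ, let w_1, ..., w_N ∈ ℤ^r and a_1, ..., a_N ∈ Γ ∩ [0, +∞), and let c(v) := max_i (⟨w_i, v⟩ - a_i) on ℝ^r. If c attains its minimum on ℝ^r, then it attains its minimum at some point of Γ^r. -/
open scoped RealInnerProductSpace


private lemma list_max {l : List ℝ} (h : l ≠ []) : ∃ m ∈ l, ∀ a ∈ l, a ≤ m := by
  induction l with
  | nil => exact absurd rfl h
  | cons a t ih =>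
    rcases eq_or_ne t [] with rfl | ht
    · exact ⟨a, by simp, by simp⟩
    · obtain ⟨m, hm, hle⟩ := ih ht
      rcases le_total a m with h1 | h1
      · exact ⟨m, List.mem_cons_of_mem _ hm, by
          intro b hb
          rcases List.mem_cons.mp hb with rfl | hb
          · exact h1
          · exact hle b hb⟩
      · exact ⟨a, List.mem_cons_self, by
          intro b hb
          rcases List.mem_cons.mp hb with rfl | hb
          · exact le_rfl
          · exact (hle b hb).trans h1⟩

private lemma list_min {l : List ℝ} (h : l ≠ []) : ∃ m ∈ l, ∀ a ∈ l, m ≤ a := by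
  induction l with
  | nil => exact absurd rfl h
  | cons a t ih =>
    rcases eq_or_ne t [] with rfl | ht
    · exact ⟨a, by simp, by simp⟩
    · obtain ⟨m, hm, hle⟩ := ih ht
      rcases le_total m a with h1 | h1
      · exact ⟨m, List.mem_cons_of_mem _ hm, by
          intro b hb
          rcases List.mem_cons.mp hb with rfl | hb
          · exact h1
          · exact hle b hb⟩
      · exact ⟨a, List.mem_cons_self, by
          intro b hb
          rcases List.mem_cons.mp hb with rfl | hb
          · exact le_rfl
          · exact h1.trans (hle b hb)⟩

private lemma key (Γ : Submodule ℚ ℝ) (hdense : Dense (Γ : Set ℝ)) :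
    ∀ (n : ℕ) (L : List ((Fin (n+1) → ℚ) × ℝ)), (∀ p ∈ L, p.2 ∈ Γ) →
    ∀ y : Fin (n+1) → ℝ, (∀ p ∈ L, (∑ j, (p.1 j : ℝ) * y j) ≤ p.2) →
    ∃ x : Fin (n+1) → ℝ, (∀ j, x j ∈ Γ) ∧ x 0 ≤ y 0 ∧
      ∀ p ∈ L, (∑ j, (p.1 j : ℝ) * x j) ≤ p.2 := by
  intro n
  induction n with
  | zero =>
    intro L hΓ y hy
    have hone : ∀ (c : Fin (0+1) → ℚ) (x : Fin (0+1) → ℝ),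
        (∑ j, (c j : ℝ) * x j) = (c 0 : ℝ) * x 0 := fun c x => Fin.sum_univ_one _
    simp only [hone] at hy ⊢
    set lbs : List ℝ := (L.filter fun p => p.1 0 < 0).map (fun p => p.2 / (p.1 0 : ℝ)) with hlbs
    have hmemlbs : ∀ p ∈ L, p.1 0 < 0 → p.2 / (p.1 0 : ℝ) ∈ lbs := by
      intro p hp hneg
      exact List.mem_map_of_mem (List.mem_filter.mpr ⟨hp, by simpa using hneg⟩)
    rcases eq_or_ne lbs [] with hemp | hne
    · -- no lower bounds: pick g ∈ Γ below y 0
      obtain ⟨g, hgΓ, hg⟩ := hdense.exists_between (show y 0 - 1 < y 0 by linarith)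
      refine ⟨fun _ => g, fun j => hgΓ, hg.2.le, ?_⟩
      intro p hp
      rcases lt_trichotomy (p.1 0) 0 with hc | hc | hc
      · exact absurd (hemp ▸ hmemlbs p hp hc) List.not_mem_nil
      · have h0 := hy p hp
        have hz : ((p.1 0 : ℝ)) = 0 := by exact_mod_cast hc
        rw [hz] at h0 ⊢
        simpa using h0
      · have hc' : (0 : ℝ) < (p.1 0 : ℝ) := by exact_mod_cast hc
        calc (p.1 0 : ℝ) * g ≤ (p.1 0 : ℝ) * y 0 := by nlinarith [hg.2]
          _ ≤ p.2 := hy p hp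
    · obtain ⟨m, hmem, hmax⟩ := list_max hne
      obtain ⟨q, hqf, hqv⟩ := List.mem_map.mp hmem
      obtain ⟨hqL, hqneg⟩ := List.mem_filter.mp hqf
      have hqneg : q.1 0 < 0 := by simpa using hqneg
      have hqneg' : ((q.1 0 : ℝ)) < 0 := by exact_mod_cast hqneg
      have hmΓ : m ∈ Γ := by
        have := Γ.smul_mem ((q.1 0)⁻¹) (hΓ q hqL)
        rwa [Rat.smul_def, Rat.cast_inv, inv_mul_eq_div, hqv] at this
      have hmy : m ≤ y 0 := by
        rw [← hqv, div_le_iff_of_neg hqneg']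
        linarith [hy q hqL, mul_comm (y 0) ((q.1 0 : ℝ))]
      refine ⟨fun _ => m, fun j => hmΓ, hmy, ?_⟩
      intro p hp
      rcases lt_trichotomy (p.1 0) 0 with hc | hc | hc
      · have hc' : ((p.1 0 : ℝ)) < 0 := by exact_mod_cast hc
        have := hmax _ (hmemlbs p hp hc)
        rw [div_le_iff_of_neg hc'] at this
        linarith [mul_comm m ((p.1 0 : ℝ))]
      · have h0 := hy p hp
        have hz : ((p.1 0 : ℝ)) = 0 := by exact_mod_cast hc
        rw [hz] at h0 ⊢
        simpa using h0
      · have hc' : (0 : ℝ) < (p.1 0 : ℝ) := by exact_mod_cast hc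
        calc (p.1 0 : ℝ) * m ≤ (p.1 0 : ℝ) * y 0 := by nlinarith
          _ ≤ p.2 := hy p hp
  | succ n ih =>
    intro L hΓ y hy
    classical
    set l : Fin (n+2) := Fin.last (n+1) with hl
    -- split a sum over Fin (n+2)
    have hsplit : ∀ (c : Fin (n+2) → ℚ) (x : Fin (n+2) → ℝ),
        ∑ j, (c j : ℝ) * x j
          = (∑ j : Fin (n+1), (c j.castSucc : ℝ) * x j.castSucc) + (c l : ℝ) * x l :=
      fun c x => Fin.sum_univ_castSucc _
    have hexp : ∀ (a b : ℚ) (c1 c2 : Fin (n+2) → ℚ) (x' : Fin (n+1) → ℝ),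
        ∑ j, ((a * c1 j.castSucc + b * c2 j.castSucc : ℚ) : ℝ) * x' j
          = (a : ℝ) * (∑ j, (c1 j.castSucc : ℝ) * x' j)
            + (b : ℝ) * (∑ j, (c2 j.castSucc : ℝ) * x' j) := by
      intro a b c1 c2 x'
      rw [Finset.mul_sum, Finset.mul_sum, ← Finset.sum_add_distrib]
      refine Finset.sum_congr rfl fun j _ => by push_cast; ring
    -- projected rows
    set prow : ((Fin (n+2) → ℚ) × ℝ) → ((Fin (n+1) → ℚ) × ℝ) :=
      fun p => ((fun j => p.1 j.castSucc), p.2) with hprow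
    set prow2 : ((Fin (n+2) → ℚ) × ℝ) → ((Fin (n+2) → ℚ) × ℝ) → ((Fin (n+1) → ℚ) × ℝ) :=
      fun p q => ((fun j => (-q.1 l) * p.1 j.castSucc + p.1 l * q.1 j.castSucc),
        ((-q.1 l : ℚ) : ℝ) * p.2 + ((p.1 l : ℚ) : ℝ) * q.2) with hprow2
    set L' : List ((Fin (n+1) → ℚ) × ℝ) :=
      (L.filterMap fun p => if p.1 l = 0 then some (prow p) else none)
      ++ ((L ×ˢ L).filterMap fun pq =>
          if 0 < pq.1.1 l ∧ pq.2.1 l < 0 then some (prow2 pq.1 pq.2) else none) with hL'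
    have hmem1 : ∀ p ∈ L, p.1 l = 0 → prow p ∈ L' := by
      intro p hp h0
      exact List.mem_append.mpr (Or.inl (List.mem_filterMap.mpr ⟨p, hp, by rw [if_pos h0]⟩))
    have hmem2 : ∀ p ∈ L, ∀ q ∈ L, 0 < p.1 l → q.1 l < 0 → prow2 p q ∈ L' := by
      intro p hp q hq h1 h2
      refine List.mem_append.mpr (Or.inr (List.mem_filterMap.mpr ⟨(p, q), ?_, ?_⟩))
      · exact List.mem_product.mpr ⟨hp, hq⟩
      · rw [if_pos ⟨h1, h2⟩]
    have hchar : ∀ z ∈ L', (∃ p, p ∈ L ∧ p.1 l = 0 ∧ z = prow p) ∨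
        (∃ p q, p ∈ L ∧ q ∈ L ∧ 0 < p.1 l ∧ q.1 l < 0 ∧ z = prow2 p q) := by
      intro z hz
      rcases List.mem_append.mp hz with h | h
      · obtain ⟨p, hp, hf⟩ := List.mem_filterMap.mp h
        by_cases h0 : p.1 l = 0
        · rw [if_pos h0] at hf
          exact Or.inl ⟨p, hp, h0, (Option.some_inj.mp hf).symm⟩
        · rw [if_neg h0] at hf; cases hf
      · obtain ⟨pq, hpq, hf⟩ := List.mem_filterMap.mp h
        by_cases h0 : 0 < pq.1.1 l ∧ pq.2.1 l < 0
        · rw [if_pos h0] at hf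
          obtain ⟨hp, hq⟩ := List.mem_product.mp hpq
          exact Or.inr ⟨pq.1, pq.2, hp, hq, h0.1, h0.2, (Option.some_inj.mp hf).symm⟩
        · rw [if_neg h0] at hf; cases hf
    have hΓ' : ∀ z ∈ L', z.2 ∈ Γ := by
      intro z hz
      rcases hchar z hz with ⟨p, hp, _, rfl⟩ | ⟨p, q, hp, hq, _, _, rfl⟩
      · exact hΓ p hp
      · refine Γ.add_mem ?_ ?_
        · have := Γ.smul_mem (-q.1 l) (hΓ p hp); rwa [Rat.smul_def] at this
        · have := Γ.smul_mem (p.1 l) (hΓ q hq); rwa [Rat.smul_def] at this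
    set y' : Fin (n+1) → ℝ := fun j => y j.castSucc with hy'def
    have hy' : ∀ z ∈ L', (∑ j, (z.1 j : ℝ) * y' j) ≤ z.2 := by
      intro z hz
      rcases hchar z hz with ⟨p, hp, h0, rfl⟩ | ⟨p, q, hp, hq, h1, h2, rfl⟩
      · have := hy p hp
        rw [hsplit] at this
        have h0' : ((p.1 l : ℝ)) = 0 := by exact_mod_cast h0
        rw [h0'] at this
        simpa using this
      · have hp' := hy p hp
        have hq' := hy q hq
        rw [hsplit] at hp' hq'
        have hplR : (0:ℝ) < (p.1 l : ℝ) := by exact_mod_cast h1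
        have hqlR : ((q.1 l : ℝ)) < 0 := by exact_mod_cast h2
        show (∑ j, (((-q.1 l) * p.1 j.castSucc + p.1 l * q.1 j.castSucc : ℚ) : ℝ) * y' j) ≤ _
        rw [hexp]
        push_cast
        have e1 := mul_le_mul_of_nonneg_left hp' (by linarith : (0:ℝ) ≤ -(q.1 l : ℝ))
        have e2 := mul_le_mul_of_nonneg_left hq' hplR.le
        have e3 : ∑ j : Fin (n+1), (p.1 j.castSucc : ℝ) * y' j = ∑ j : Fin (n+1), (p.1 j.castSucc : ℝ) * y j.castSucc := rfl
        have e4 : ∑ j : Fin (n+1), (q.1 j.castSucc : ℝ) * y' j = ∑ j : Fin (n+1), (q.1 j.castSucc : ℝ) * y j.castSucc := rfl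
        have e5 : (prow2 p q).2 = -(q.1 l : ℝ) * p.2 + (p.1 l : ℝ) * q.2 := by
          show ((-q.1 l : ℚ) : ℝ) * p.2 + ((p.1 l : ℚ) : ℝ) * q.2 = _
          push_cast; ring
        nlinarith [e1, e2, e3, e4, e5]
    obtain ⟨x', hx'Γ, hx'0, hx'⟩ := ih L' hΓ' y' hy'
    -- bounds coming from rows with nonzero last coefficient
    set S : ((Fin (n+2) → ℚ) × ℝ) → ℝ := fun p => ∑ j, (p.1 j.castSucc : ℝ) * x' j with hS
    set V : ((Fin (n+2) → ℚ) × ℝ) → ℝ := fun p => (p.2 - S p) / (p.1 l : ℝ) with hV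
    have hSΓ : ∀ p, S p ∈ Γ := by
      intro p
      refine Submodule.sum_mem _ fun j _ => ?_
      have := Γ.smul_mem (p.1 j.castSucc) (hx'Γ j)
      rwa [Rat.smul_def] at this
    have hVΓ : ∀ p ∈ L, V p ∈ Γ := by
      intro p hp
      have := Γ.smul_mem ((p.1 l)⁻¹) (Γ.sub_mem (hΓ p hp) (hSΓ p))
      rwa [Rat.smul_def, Rat.cast_inv, inv_mul_eq_div] at this
    -- the pair constraints give compatibility of bounds
    have hcomp : ∀ p ∈ L, ∀ q ∈ L, 0 < p.1 l → q.1 l < 0 → V q ≤ V p := by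
      intro p hp q hq h1 h2
      have hplR : (0:ℝ) < (p.1 l : ℝ) := by exact_mod_cast h1
      have hqlR : ((q.1 l : ℝ)) < 0 := by exact_mod_cast h2
      have hpair := hx' _ (hmem2 p hp q hq h1 h2)
      have : (∑ j, ((prow2 p q).1 j : ℝ) * x' j)
          = (-(q.1 l : ℝ)) * S p + ((p.1 l : ℝ)) * S q := by
        show (∑ j, (((-q.1 l) * p.1 j.castSucc + p.1 l * q.1 j.castSucc : ℚ) : ℝ) * x' j) = _
        rw [hexp]; push_cast; ring
      rw [this] at hpair
      have hpair2 : (-(q.1 l : ℝ)) * S p + ((p.1 l : ℝ)) * S q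
          ≤ (-(q.1 l : ℝ)) * p.2 + ((p.1 l : ℝ)) * q.2 := by
        refine hpair.trans_eq ?_
        show ((-q.1 l : ℚ) : ℝ) * p.2 + ((p.1 l : ℚ) : ℝ) * q.2 = _
        push_cast; ring
      have hq' : V q * (q.1 l : ℝ) = q.2 - S q := div_mul_cancel₀ _ hqlR.ne
      have hp'' : V p * (p.1 l : ℝ) = p.2 - S p := div_mul_cancel₀ _ hplR.ne'
      have e1 : (p.1 l : ℝ) * (V q * (q.1 l : ℝ)) = (p.1 l : ℝ) * (q.2 - S q) := by rw [hq']
      have e2 : (-(q.1 l : ℝ)) * (V p * (p.1 l : ℝ)) = (-(q.1 l : ℝ)) * (p.2 - S p) := by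
        rw [hp'']
      have h3 : (-(q.1 l : ℝ) * (p.1 l : ℝ)) * V q ≤ (-(q.1 l : ℝ) * (p.1 l : ℝ)) * V p := by
        nlinarith [hpair2, e1, e2]
      exact le_of_mul_le_mul_left h3 (mul_pos (by linarith) hplR)
    -- choose the last coordinate
    have hchoice : ∃ xl : ℝ, xl ∈ Γ ∧ (∀ p ∈ L, p.1 l < 0 → V p ≤ xl) ∧
        (∀ p ∈ L, 0 < p.1 l → xl ≤ V p) := by
      set lbs : List ℝ := (L.filter fun p => p.1 l < 0).map V with hlbs
      have hmemlbs : ∀ p ∈ L, p.1 l < 0 → V p ∈ lbs := fun p hp hneg =>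
        List.mem_map_of_mem (List.mem_filter.mpr ⟨hp, by simpa using hneg⟩)
      rcases eq_or_ne lbs [] with hemp | hne
      · set ubs : List ℝ := (L.filter fun p => 0 < p.1 l).map V with hubs
        have hmemubs : ∀ p ∈ L, 0 < p.1 l → V p ∈ ubs := fun p hp hpos =>
          List.mem_map_of_mem (List.mem_filter.mpr ⟨hp, by simpa using hpos⟩)
        rcases eq_or_ne ubs [] with hemp2 | hne2
        · refine ⟨0, Γ.zero_mem, ?_, ?_⟩
          · intro p hp hneg
            exact absurd (hemp ▸ hmemlbs p hp hneg) List.not_mem_nil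
          · intro p hp hpos
            exact absurd (hemp2 ▸ hmemubs p hp hpos) List.not_mem_nil
        · obtain ⟨m, hmem, hmin⟩ := list_min hne2
          obtain ⟨q, hqf, hqv⟩ := List.mem_map.mp hmem
          have hqL := (List.mem_filter.mp hqf).1
          refine ⟨m, hqv ▸ hVΓ q hqL, ?_, ?_⟩
          · intro p hp hneg
            exact absurd (hemp ▸ hmemlbs p hp hneg) List.not_mem_nil
          · intro p hp hpos
            exact hmin _ (hmemubs p hp hpos)
      · obtain ⟨m, hmem, hmax⟩ := list_max hne
        obtain ⟨q, hqf, hqv⟩ := List.mem_map.mp hmem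
        obtain ⟨hqL, hqneg⟩ := List.mem_filter.mp hqf
        have hqneg : q.1 l < 0 := by simpa using hqneg
        refine ⟨m, hqv ▸ hVΓ q hqL, ?_, ?_⟩
        · intro p hp hneg
          exact hmax _ (hmemlbs p hp hneg)
        · intro p hp hpos
          exact hqv ▸ hcomp p hp q hqL hpos hqneg
    obtain ⟨xl, hxlΓ, hlb, hub⟩ := hchoice
    refine ⟨Fin.snoc x' xl, ?_, ?_, ?_⟩
    · intro j
      refine Fin.lastCases ?_ ?_ j
      · simpa using hxlΓ
      · intro i; simpa using hx'Γ i
    · have h0 : (Fin.snoc x' xl : Fin (n+2) → ℝ) 0 = x' 0 := by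
        rw [← Fin.castSucc_zero, Fin.snoc_castSucc]
      rw [h0]
      refine hx'0.trans_eq ?_
      show y (Fin.castSucc 0) = y 0
      norm_num
    · intro p hp
      rw [hsplit]
      have hsnoc : (∑ j : Fin (n+1), (p.1 j.castSucc : ℝ) * (Fin.snoc x' xl : Fin (n+2) → ℝ) j.castSucc)
          = S p := by
        refine Finset.sum_congr rfl fun j _ => by rw [Fin.snoc_castSucc]
      rw [hsnoc, Fin.snoc_last]
      rcases lt_trichotomy (p.1 l) 0 with hc | hc | hc
      · have hcR : ((p.1 l : ℝ)) < 0 := by exact_mod_cast hc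
        have := hlb p hp hc
        rw [hV, div_le_iff_of_neg hcR] at this
        linarith [mul_comm xl ((p.1 l : ℝ))]
      · have hcR : ((p.1 l : ℝ)) = 0 := by exact_mod_cast hc
        have := hx' _ (hmem1 p hp hc)
        rw [hcR]
        simpa using this
      · have hcR : (0:ℝ) < ((p.1 l : ℝ)) := by exact_mod_cast hc
        have := hub p hp hc
        rw [hV, le_div_iff₀ hcR] at this
        linarith [mul_comm xl ((p.1 l : ℝ))]

/-- let `Γ` be a dense ℚ-vector subspace of ℝ, `w_i ∈ ℤ^r`,
`a_i ∈ Γ ∩ [0,+∞)`, and `c(v) := max_i (⟨w_i, v⟩ - a_i)`. If `c` attains its minimum on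
`ℝ^r`, then it attains its minimum at a point of `Γ^r`. -/
theorem stmt12 {r N : ℕ} [Nonempty (Fin N)]
    (Γ : Submodule ℚ ℝ) (hdense : Dense (Γ : Set ℝ))
    (w : Fin N → EuclideanSpace ℝ (Fin r))
    (hw : ∀ i j, ∃ m : ℤ, w i j = (m : ℝ))
    (a : Fin N → ℝ) (ha : ∀ i, 0 ≤ a i) (haΓ : ∀ i, a i ∈ Γ)
    (hmin : ∃ v : EuclideanSpace ℝ (Fin r),
      ∀ v', (⨆ i, (⟪w i, v⟫ - a i)) ≤ ⨆ i, (⟪w i, v'⟫ - a i)) :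
    ∃ v : EuclideanSpace ℝ (Fin r), (∀ j, v j ∈ Γ) ∧
      ∀ v', (⨆ i, (⟪w i, v⟫ - a i)) ≤ ⨆ i, (⟪w i, v'⟫ - a i) := by
  obtain ⟨v₀, hv₀⟩ := hmin
  have hinner : ∀ (u v : EuclideanSpace ℝ (Fin r)), (⟪u, v⟫ : ℝ) = ∑ j, u j * v j := by
    intro u v
    simp [PiLp.inner_apply, RCLike.inner_apply, mul_comm]
  set wq : Fin N → Fin r → ℚ := fun i j => ((hw i j).choose : ℚ) with hwq
  have hwspec : ∀ i j, ((wq i j : ℚ) : ℝ) = w i j := by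
    intro i j
    rw [hwq]
    push_cast
    exact ((hw i j).choose_spec).symm
  set row : Fin N → Fin (r+1) → ℚ := fun i => Fin.cons (-1) (wq i) with hrow
  set L : List ((Fin (r+1) → ℚ) × ℝ) := (List.finRange N).map fun i => (row i, a i) with hL
  have hmemL : ∀ i, (row i, a i) ∈ L := fun i =>
    List.mem_map_of_mem (List.mem_finRange i)
  have hΓL : ∀ p ∈ L, p.2 ∈ Γ := by
    intro p hp
    obtain ⟨i, _, rfl⟩ := List.mem_map.mp hp
    exact haΓ i
  have hsum : ∀ (i : Fin N) (x : Fin (r+1) → ℝ),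
      (∑ j, ((row i) j : ℝ) * x j) = -(x 0) + ∑ j, (wq i j : ℝ) * x j.succ := by
    intro i x
    rw [Fin.sum_univ_succ, hrow]
    simp
  set m : ℝ := ⨆ i, (⟪w i, v₀⟫ - a i) with hm
  set y : Fin (r+1) → ℝ := Fin.cons m (fun j => v₀ j) with hy
  have hyL : ∀ p ∈ L, (∑ j, (p.1 j : ℝ) * y j) ≤ p.2 := by
    intro p hp
    obtain ⟨i, _, rfl⟩ := List.mem_map.mp hp
    rw [hsum]
    have h1 : (⟪w i, v₀⟫ - a i) ≤ m :=
      le_ciSup (f := fun i => (⟪w i, v₀⟫ - a i)) (Finite.bddAbove_range _) i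
    rw [hinner] at h1
    have h2 : (∑ j, (wq i j : ℝ) * v₀ j) = ∑ j, w i j * v₀ j :=
      Finset.sum_congr rfl fun j _ => by rw [hwspec]
    have hy0 : y 0 = m := rfl
    have hys : ∀ j : Fin r, y j.succ = v₀ j := fun j => rfl
    simp only [hy0, hys]
    linarith [h1, h2.le, h2.ge]
  obtain ⟨x, hxΓ, hx0, hxc⟩ := key Γ hdense r L hΓL y hyL
  refine ⟨(WithLp.toLp 2 (fun j : Fin r => x j.succ) : EuclideanSpace ℝ (Fin r)), fun j => hxΓ j.succ, ?_⟩
  intro v'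
  have hbound : ∀ i, ⟪w i, (WithLp.toLp 2 (fun j : Fin r => x j.succ) : EuclideanSpace ℝ (Fin r))⟫ - a i ≤ x 0 := by
    intro i
    have hx := hxc (row i, a i) (hmemL i)
    rw [hsum] at hx
    rw [hinner]
    simp only [PiLp.toLp_apply]
    have h2 : (∑ j, (wq i j : ℝ) * x j.succ) = ∑ j, w i j * x j.succ :=
      Finset.sum_congr rfl fun j _ => by rw [hwspec]
    linarith [h2.le, h2.ge]
  have hy0 : y 0 = m := rfl
  refine ciSup_le fun i => (hbound i).trans ?_
  calc x 0 ≤ m := hx0.trans_eq hy0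
    _ ≤ ⨆ i, (⟪w i, v'⟫ - a i) := hv₀ v'
end

section
/- Let w_1, ..., w_N ∈ ℤ^r, a_1, ..., a_N ∈ [0, +∞), and define ∂̲B := W** as in the setting of the weight polytope, where W(w) := min{a_i : w_i = w}. Then (∂̲B)^{-1}([0, +∞)) = conv{w_i : a_i < +∞} and, assuming min_i a_i = 0, (∂̲B)^{-1}(0) = conv{w_i : a_i = 0}. -/
open scoped RealInnerProductSpace

/-- The weight–order function `W(w) = min{a_i : w_i = w}` (`+∞` on the empty set). -/
noncomputable def Wfun {r N : ℕ} (w : Fin N → EuclideanSpace ℝ (Fin r))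
    (a : Fin N → EReal) (v : EuclideanSpace ℝ (Fin r)) : EReal :=
  sInf {x : EReal | ∃ i, w i = v ∧ a i = x}

/-- The convex (Legendre–Fenchel) conjugate. -/
noncomputable def conj {q : ℕ} (c : EuclideanSpace ℝ (Fin q) → EReal)
    (v : EuclideanSpace ℝ (Fin q)) : EReal :=
  ⨆ x : EuclideanSpace ℝ (Fin q), ((⟪v, x⟫ : ℝ) : EReal) - c x

section aux

variable {r N : ℕ} [Nonempty (Fin N)]

noncomputable def Ffun (w : Fin N → EuclideanSpace ℝ (Fin r)) (a : Fin N → ℝ)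
    (v : EuclideanSpace ℝ (Fin r)) : ℝ :=
  Finset.univ.sup' Finset.univ_nonempty fun i => ⟪v, w i⟫ - a i

lemma conj_Wfun (w : Fin N → EuclideanSpace ℝ (Fin r)) (a : Fin N → ℝ) (v : EuclideanSpace ℝ (Fin r)) :
    conj (Wfun w (fun i => (a i : EReal))) v = ((Ffun w a v : ℝ) : EReal) := by
  apply le_antisymm
  · apply iSup_le
    intro x
    by_cases hx : ∃ i, w i = x
    · have hne : {e : EReal | ∃ i, w i = x ∧ (a i : EReal) = e}.Nonempty := by
        obtain ⟨i, hi⟩ := hx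
        exact ⟨(a i : EReal), i, hi, rfl⟩
      have hfin : {e : EReal | ∃ i, w i = x ∧ (a i : EReal) = e}.Finite := by
        have : {e : EReal | ∃ i, w i = x ∧ (a i : EReal) = e} ⊆
            Set.range fun i => (a i : EReal) := by
          rintro e ⟨i, -, rfl⟩; exact ⟨i, rfl⟩
        exact (Set.finite_range _).subset this
      have hmem : Wfun w (fun i => (a i : EReal)) x ∈
          {e : EReal | ∃ i, w i = x ∧ (a i : EReal) = e} :=
        hne.csInf_mem hfin
      obtain ⟨j, hj, hj'⟩ := hmem
      rw [← hj']
      rw [show ((⟪v, x⟫ : ℝ) : EReal) - (a j : EReal) = ((⟪v, x⟫ - a j : ℝ) : EReal) from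
        (EReal.coe_sub _ _).symm]
      rw [EReal.coe_le_coe_iff]
      rw [← hj]
      exact Finset.le_sup' (fun i => ⟪v, w i⟫ - a i) (Finset.mem_univ j)
    · have : Wfun w (fun i => (a i : EReal)) x = ⊤ := by
        rw [Wfun]
        refine (congrArg sInf (?_ : _ = (∅ : Set EReal))).trans sInf_empty
        ext e
        simp only [Set.mem_setOf_eq, Set.mem_empty_iff_false, iff_false]
        rintro ⟨i, hi, -⟩
        exact hx ⟨i, hi⟩
      rw [this, EReal.sub_top]
      exact bot_le
  · obtain ⟨j, -, hj⟩ := Finset.exists_mem_eq_sup' (Finset.univ_nonempty (α := Fin N))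
      (fun i => ⟪v, w i⟫ - a i)
    rw [Ffun, hj]
    have h1 : Wfun w (fun i => (a i : EReal)) (w j) ≤ (a j : EReal) :=
      sInf_le ⟨j, rfl, rfl⟩
    calc ((⟪v, w j⟫ - a j : ℝ) : EReal)
        = ((⟪v, w j⟫ : ℝ) : EReal) - (a j : EReal) := EReal.coe_sub _ _
      _ ≤ ((⟪v, w j⟫ : ℝ) : EReal) - Wfun w (fun i => (a i : EReal)) (w j) :=
          EReal.sub_le_sub le_rfl h1
      _ ≤ _ := le_iSup (fun x => ((⟪v, x⟫ : ℝ) : EReal) - Wfun w (fun i => (a i : EReal)) x) (w j)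

lemma conj2_eq (w : Fin N → EuclideanSpace ℝ (Fin r)) (a : Fin N → ℝ) (v : EuclideanSpace ℝ (Fin r)) :
    conj (conj (Wfun w (fun i => (a i : EReal)))) v
      = ⨆ x : EuclideanSpace ℝ (Fin r), ((⟪v, x⟫ - Ffun w a x : ℝ) : EReal) := by
  rw [conj]
  congr 1
  ext x
  rw [conj_Wfun, EReal.coe_sub]


lemma conj2_nonneg (w : Fin N → EuclideanSpace ℝ (Fin r)) (a : Fin N → ℝ) (ha : ∀ i, 0 ≤ a i)
    (v : EuclideanSpace ℝ (Fin r)) :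
    0 ≤ conj (conj (Wfun w (fun i => (a i : EReal)))) v := by
  rw [conj2_eq]
  refine le_trans ?_ (le_iSup (fun x => ((⟪v, x⟫ - Ffun w a x : ℝ) : EReal)) 0)
  rw [← EReal.coe_zero, EReal.coe_le_coe_iff]
  have hF : Ffun w a 0 ≤ 0 := by
    apply Finset.sup'_le
    intro i _
    have : ⟪(0 : EuclideanSpace ℝ (Fin r)), w i⟫ = 0 := inner_zero_left _
    rw [this]
    linarith [ha i]
  have : ⟪v, (0 : EuclideanSpace ℝ (Fin r))⟫ = 0 := inner_zero_right _
  rw [this]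
  linarith

lemma conj2_le (w : Fin N → EuclideanSpace ℝ (Fin r)) (a : Fin N → ℝ)
    (T : Set (Fin N)) (A : ℝ) (hT : ∀ i ∈ T, a i ≤ A)
    (v : EuclideanSpace ℝ (Fin r)) (hv : v ∈ convexHull ℝ (w '' T)) :
    conj (conj (Wfun w (fun i => (a i : EReal)))) v ≤ (A : EReal) := by
  set G : Set (EuclideanSpace ℝ (Fin r)) :=
    {u | ∀ x, ⟪u, x⟫ ≤ Ffun w a x + A} with hG
  have hGconv : Convex ℝ G := by
    intro u1 h1 u2 h2 s t hs ht hst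
    intro x
    have e1 : ⟪s • u1 + t • u2, x⟫ = s * ⟪u1, x⟫ + t * ⟪u2, x⟫ := by
      rw [inner_add_left, real_inner_smul_left, real_inner_smul_left]
    rw [e1]
    have hu1 : (⟪u1, x⟫ : ℝ) ≤ Ffun w a x + A := h1 x
    have hu2 : (⟪u2, x⟫ : ℝ) ≤ Ffun w a x + A := h2 x
    calc s * ⟪u1, x⟫ + t * ⟪u2, x⟫
        ≤ s * (Ffun w a x + A) + t * (Ffun w a x + A) :=
          add_le_add (mul_le_mul_of_nonneg_left hu1 hs) (mul_le_mul_of_nonneg_left hu2 ht)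
      _ = Ffun w a x + A := by rw [← add_mul, hst, one_mul]
  have hsub : w '' T ⊆ G := by
    rintro _ ⟨i, hi, rfl⟩
    intro x
    have h1 : ⟪x, w i⟫ - a i ≤ Ffun w a x :=
      Finset.le_sup' (fun j => ⟪x, w j⟫ - a j) (Finset.mem_univ i)
    have h2 : ⟪w i, x⟫ = ⟪x, w i⟫ := real_inner_comm _ _
    rw [h2]
    have := hT i hi
    linarith
  have hvG : v ∈ G := convexHull_min hsub hGconv hv
  rw [conj2_eq]
  apply iSup_le
  intro x
  rw [EReal.coe_le_coe_iff]
  have := hvG x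
  linarith

lemma conj2_top (w : Fin N → EuclideanSpace ℝ (Fin r)) (a : Fin N → ℝ) (ha : ∀ i, 0 ≤ a i)
    (v : EuclideanSpace ℝ (Fin r)) (hv : v ∉ convexHull ℝ (Set.range w)) :
    conj (conj (Wfun w (fun i => (a i : EReal)))) v = ⊤ := by
  have hK : IsClosed (convexHull ℝ (Set.range w)) :=
    (Set.finite_range w).isClosed_convexHull (𝕜 := ℝ)
  obtain ⟨f, u, hfu, huv⟩ :=
    geometric_hahn_banach_closed_point (convex_convexHull ℝ _) hK hv
  set y := (InnerProductSpace.toDual ℝ (EuclideanSpace ℝ (Fin r))).symm f with hy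
  have hyf : ∀ z, ⟪y, z⟫ = f z := fun z => InnerProductSpace.toDual_symm_apply
  rw [conj2_eq, EReal.eq_top_iff_forall_lt]
  intro M
  set t : ℝ := max ((M + 1) / (f v - u)) 1 with hts
  have ht0 : 0 < t := lt_of_lt_of_le one_pos (le_max_right _ _)
  have hfvu : 0 < f v - u := by linarith
  have key : M < ⟪v, t • y⟫ - Ffun w a (t • y) := by
    have hvt : ⟪v, t • y⟫ = t * f v := by
      rw [real_inner_smul_right, real_inner_comm, hyf]
    have hFt : Ffun w a (t • y) ≤ t * u := by
      apply Finset.sup'_le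
      intro i _
      have : ⟪t • y, w i⟫ = t * f (w i) := by rw [real_inner_smul_left, hyf]
      rw [this]
      have h1 : f (w i) < u := hfu (w i) (subset_convexHull ℝ _ (Set.mem_range_self i))
      have h2 := ha i
      nlinarith
    have h3 : (M + 1) / (f v - u) ≤ t := le_max_left _ _
    have h4 : M + 1 ≤ t * (f v - u) := by
      rw [div_le_iff₀ hfvu] at h3
      linarith
    rw [hvt]
    nlinarith
  calc (M : EReal) < ((⟪v, t • y⟫ - Ffun w a (t • y) : ℝ) : EReal) := by
        exact_mod_cast key
    _ ≤ _ := le_iSup (fun x => ((⟪v, x⟫ - Ffun w a x : ℝ) : EReal)) (t • y)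

lemma conj2_pos (w : Fin N → EuclideanSpace ℝ (Fin r)) (a : Fin N → ℝ) (ha : ∀ i, 0 ≤ a i)
    (v : EuclideanSpace ℝ (Fin r)) (hv : v ∉ convexHull ℝ (w '' {i | a i = 0})) :
    0 < conj (conj (Wfun w (fun i => (a i : EReal)))) v := by
  have hK : IsClosed (convexHull ℝ (w '' {i | a i = 0})) :=
    ((Set.finite_range w).subset (Set.image_subset_range _ _)).isClosed_convexHull (𝕜 := ℝ)
  obtain ⟨f, u, hfu, huv⟩ :=
    geometric_hahn_banach_closed_point (convex_convexHull ℝ _) hK hv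
  set y := (InnerProductSpace.toDual ℝ (EuclideanSpace ℝ (Fin r))).symm f with hy
  have hyf : ∀ z, ⟪y, z⟫ = f z := fun z => InnerProductSpace.toDual_symm_apply
  set c : Fin N → ℝ := fun i => f (w i) - f v with hc
  set t : ℝ := Finset.univ.inf' Finset.univ_nonempty
    (fun i => if a i = 0 then 1 else a i / (|c i| + 1)) with hts
  have ht0 : 0 < t := by
    rw [hts, Finset.lt_inf'_iff]
    intro i _
    by_cases h : a i = 0
    · simp [h]
    · simp only [h, if_false]
      have hai : 0 < a i := lt_of_le_of_ne (ha i) (Ne.symm h)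
      positivity
  have key : ∀ i, t * c i < a i := by
    intro i
    by_cases h : a i = 0
    · have hwi : f (w i) < u :=
        hfu (w i) (subset_convexHull ℝ _ ⟨i, h, rfl⟩)
      have : c i < 0 := by rw [hc]; dsimp; linarith
      rw [h]
      exact mul_neg_of_pos_of_neg ht0 this
    · have hai : 0 < a i := lt_of_le_of_ne (ha i) (Ne.symm h)
      have hti : t ≤ a i / (|c i| + 1) := by
        have := Finset.inf'_le (fun i => if a i = 0 then 1 else a i / (|c i| + 1))
          (Finset.mem_univ i)
        rwa [if_neg h] at this
      have h1 : t * c i ≤ t * |c i| := mul_le_mul_of_nonneg_left (le_abs_self _) ht0.le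
      have h2 : t * |c i| ≤ (a i / (|c i| + 1)) * |c i| :=
        mul_le_mul_of_nonneg_right hti (abs_nonneg _)
      have h3 : (a i / (|c i| + 1)) * |c i| < a i := by
        rw [div_mul_eq_mul_div, div_lt_iff₀ (by positivity)]
        nlinarith [abs_nonneg (c i)]
      linarith
  have hpos : 0 < ⟪v, t • y⟫ - Ffun w a (t • y) := by
    have hvt : ⟪v, t • y⟫ = t * f v := by
      rw [real_inner_smul_right, real_inner_comm, hyf]
    have hFt : Ffun w a (t • y) < t * f v := by
      rw [Ffun, Finset.sup'_lt_iff]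
      intro i _
      have : ⟪t • y, w i⟫ = t * f (w i) := by rw [real_inner_smul_left, hyf]
      rw [this]
      have := key i
      have : t * c i < a i := this
      rw [hc] at this
      dsimp at this
      nlinarith
    rw [hvt]
    linarith
  rw [conj2_eq]
  calc (0 : EReal) < ((⟪v, t • y⟫ - Ffun w a (t • y) : ℝ) : EReal) := by
        exact_mod_cast hpos
    _ ≤ _ := le_iSup (fun x => ((⟪v, x⟫ - Ffun w a x : ℝ) : EReal)) (t • y)

end aux

lemma conj2_empty {r N : ℕ} [IsEmpty (Fin N)] (w : Fin N → EuclideanSpace ℝ (Fin r))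
    (a : Fin N → ℝ) (v : EuclideanSpace ℝ (Fin r)) :
    conj (conj (Wfun w (fun i => (a i : EReal)))) v = ⊤ := by
  have hW : ∀ x, Wfun w (fun i => (a i : EReal)) x = ⊤ := by
    intro x
    rw [Wfun]
    refine (congrArg sInf (?_ : _ = (∅ : Set EReal))).trans sInf_empty
    ext e
    simp only [Set.mem_setOf_eq, Set.mem_empty_iff_false, iff_false]
    rintro ⟨i, -, -⟩
    exact isEmptyElim i
  have hc : ∀ x, conj (Wfun w (fun i => (a i : EReal))) x = ⊥ := by
    intro x
    rw [conj]
    simp_rw [hW, EReal.sub_top, iSup_bot]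
  rw [conj]
  simp_rw [hc, EReal.coe_sub_bot]
  exact iSup_const

/-- for `∂̲B = W**` with `w_i ∈ ℤ^r` and finite `a_i ≥ 0`, one has
`(∂̲B)⁻¹([0,+∞)) = conv{w_i : a_i < +∞} = conv{w_i}`, and if `min_i a_i = 0` then
`(∂̲B)⁻¹(0) = conv{w_i : a_i = 0}`. -/
theorem stmt18 {r N : ℕ} (w : Fin N → EuclideanSpace ℝ (Fin r))
    (hw : ∀ i j, ∃ m : ℤ, w i j = (m : ℝ))
    (a : Fin N → ℝ) (ha : ∀ i, 0 ≤ a i) :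
    ({v | 0 ≤ conj (conj (Wfun w (fun i => (a i : EReal)))) v ∧
          conj (conj (Wfun w (fun i => (a i : EReal)))) v < ⊤} =
        convexHull ℝ {x | ∃ i, w i = x}) ∧
    ((∃ i, a i = 0) →
      {v | conj (conj (Wfun w (fun i => (a i : EReal)))) v = 0} =
        convexHull ℝ {x | ∃ i, a i = 0 ∧ w i = x}) := by
  have hrange : {x | ∃ i, w i = x} = Set.range w := rfl
  rcases isEmpty_or_nonempty (Fin N) with hN | hN
  · constructor
    · rw [hrange, Set.range_eq_empty w, convexHull_empty]
      ext v
      simp only [Set.mem_setOf_eq, Set.mem_empty_iff_false, iff_false, not_and]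
      intro _
      rw [conj2_empty]
      exact lt_irrefl ⊤
    · rintro ⟨i, -⟩
      exact isEmptyElim i
  · constructor
    · ext v
      simp only [Set.mem_setOf_eq, hrange]
      constructor
      · rintro ⟨-, hlt⟩
        by_contra hv
        rw [conj2_top w a ha v hv] at hlt
        exact lt_irrefl ⊤ hlt
      · intro hv
        refine ⟨conj2_nonneg w a ha v, ?_⟩
        have hv' : v ∈ convexHull ℝ (w '' Set.univ) := by rwa [Set.image_univ]
        have hA : ∀ i ∈ Set.univ, a i ≤ Finset.univ.sup' Finset.univ_nonempty a :=
          fun i _ => Finset.le_sup' a (Finset.mem_univ i)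
        exact lt_of_le_of_lt (conj2_le w a Set.univ _ hA v hv') (EReal.coe_lt_top _)
    · rintro ⟨i0, hi0⟩
      have hS : {x | ∃ i, a i = 0 ∧ w i = x} = w '' {i | a i = 0} := by
        ext x
        simp [Set.mem_image]
      rw [hS]
      ext v
      simp only [Set.mem_setOf_eq]
      constructor
      · intro h0
        by_contra hv
        have := conj2_pos w a ha v hv
        rw [h0] at this
        exact lt_irrefl 0 this
      · intro hv
        refine le_antisymm ?_ (conj2_nonneg w a ha v)
        have := conj2_le w a {i | a i = 0} 0 (fun i hi => le_of_eq hi) v hv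
        rwa [EReal.coe_zero] at this
end
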